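/- arXiv:math/0402158 — 2 statements merged into one kernel-verified Lean document; each statement's English description precedes it below -/
import Mathlib

section
/- Let n ≥ 2, k ≥ 1, and let T : P_{n,2k} → P_{n,2k} be the linear operator T(f) = ∫_{S^{n-1}} f(v)·(v₁x₁+⋯+v_nx_n)^{2k} dσ(v). Then for all f, g ∈ P_{n,2k}, ⟨T(f), g⟩_d = (2k)!·⟨f, g⟩, where ⟨·,·⟩_d is the differential inner product and ⟨·,·⟩ is the L² inner product. -/
open MeasureTheory MvPolynomial

noncomputable section

/-- The rotation-invariant probability measure `σ` on the unit sphere `S^{m-1} ⊆ ℝ^m`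
(the normalization of the surface measure). -/
def sphereMeasure (m : ℕ) : Measure (Metric.sphere (0 : EuclideanSpace ℝ (Fin m)) 1) :=
  ((volume : Measure (EuclideanSpace ℝ (Fin m))).toSphere Set.univ)⁻¹ •
    (volume : Measure (EuclideanSpace ℝ (Fin m))).toSphere

/-- Evaluation of a polynomial at a point of the unit sphere. -/
def evalS {m : ℕ} (f : MvPolynomial (Fin m) ℝ)
    (v : Metric.sphere (0 : EuclideanSpace ℝ (Fin m)) 1) : ℝ :=
  eval (fun i => (v : EuclideanSpace ℝ (Fin m)) i) f

/-- The L² inner product `⟨f,g⟩ = ∫_{S^{n-1}} f·g dσ`. -/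
def L2inner (n : ℕ) (f g : MvPolynomial (Fin n) ℝ) : ℝ :=
  ∫ v, evalS f v * evalS g v ∂(sphereMeasure n)

/-- `r^{2k} = (x₁² + ⋯ + x_n²)^k`. -/
def rPow (n k : ℕ) : MvPolynomial (Fin n) ℝ := (∑ i : Fin n, X i ^ 2) ^ k

/-- Membership in the hyperplane `M` of forms of degree `2k` with integral 0 on the sphere. -/
def memM (n k : ℕ) (f : MvPolynomial (Fin n) ℝ) : Prop :=
  f.IsHomogeneous (2 * k) ∧ (∫ v, evalS f v ∂(sphereMeasure n)) = 0

/-- `D_M = C(n+2k-1, 2k) - 1`, the dimension of `M`. -/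
def DM (n k : ℕ) : ℕ := Nat.choose (n + 2 * k - 1) (2 * k) - 1

/-- The unit ball of the L² metric in `M`. -/
def BM (n k : ℕ) : Set (MvPolynomial (Fin n) ℝ) :=
  {f | memM n k f ∧ L2inner n f f ≤ 1}

/-- The section `C̃` of the cone of nonnegative forms: `f ∈ M` with `f + r^{2k}` nonnegative. -/
def Ctilde (n k : ℕ) : Set (MvPolynomial (Fin n) ℝ) :=
  {f | memM n k f ∧ ∀ x : Fin n → ℝ, 0 ≤ eval x (f + rPow n k)}

/-- `f` is a sum of squares of forms of degree `k`. -/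
def IsSOS (n k : ℕ) (f : MvPolynomial (Fin n) ℝ) : Prop :=
  ∃ (m : ℕ) (g : Fin m → MvPolynomial (Fin n) ℝ),
    (∀ i, (g i).IsHomogeneous k) ∧ f = ∑ i, g i ^ 2

/-- The section `S̃q` of the cone of sums of squares. -/
def SqTilde (n k : ℕ) : Set (MvPolynomial (Fin n) ℝ) :=
  {f | memM n k f ∧ IsSOS n k (f + rPow n k)}

/-- `f` is a sum of `2k`-th powers of linear forms. -/
def IsSOP (n k : ℕ) (f : MvPolynomial (Fin n) ℝ) : Prop :=
  ∃ (m : ℕ) (l : Fin m → MvPolynomial (Fin n) ℝ),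
    (∀ i, (l i).IsHomogeneous 1) ∧ f = ∑ i, l i ^ (2 * k)

/-- The section `L̃f` of the cone of sums of `2k`-th powers of linear forms. -/
def LfTilde (n k : ℕ) : Set (MvPolynomial (Fin n) ℝ) :=
  {f | memM n k f ∧ IsSOP n k (f + rPow n k)}

/-- `‖f‖_∞ = max_{x ∈ S^{n-1}} |f(x)|`. -/
def supNorm (n : ℕ) (f : MvPolynomial (Fin n) ℝ) : ℝ :=
  ⨆ v : Metric.sphere (0 : EuclideanSpace ℝ (Fin n)) 1, |evalS f v|

/-- The gradient inner product `⟨f,g⟩_G = (1/(4k²)) ∫_{S^{n-1}} ⟨∇f,∇g⟩ dσ`. -/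
def gradInner (n k : ℕ) (f g : MvPolynomial (Fin n) ℝ) : ℝ :=
  (1 / (4 * (k : ℝ) ^ 2)) *
    ∫ v, (∑ i : Fin n, evalS (pderiv i f) v * evalS (pderiv i g) v) ∂(sphereMeasure n)

/-- The unit ball of the gradient metric in `M`. -/
def BG (n k : ℕ) : Set (MvPolynomial (Fin n) ℝ) :=
  {f | memM n k f ∧ gradInner n k f f ≤ 1}

/-- The differential (apolar) inner product `⟨f,g⟩_d = D_f(g) = ∑_α α! c_α(f) c_α(g)`. -/
def diffInner (n : ℕ) (f g : MvPolynomial (Fin n) ℝ) : ℝ :=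
  ∑ α ∈ f.support, (∏ i, (Nat.factorial (α i) : ℝ)) * f.coeff α * g.coeff α

/-- The linear form `v₁x₁ + ⋯ + v_nx_n`. -/
def linForm (n : ℕ) (v : Fin n → ℝ) : MvPolynomial (Fin n) ℝ :=
  ∑ i, C (v i) * X i

/-- The norm `‖f‖_sq = max { |⟨f, g²⟩| : g ∈ P_{n,k}, ∫ g² dσ = 1 }`. -/
def sqNorm (n k : ℕ) (f : MvPolynomial (Fin n) ℝ) : ℝ :=
  ⨆ g : {g : MvPolynomial (Fin n) ℝ // g.IsHomogeneous k ∧ L2inner n g g = 1},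
    |L2inner n f ((g : MvPolynomial (Fin n) ℝ) ^ 2)|

/-- The dual cone of `L` in the L² (integral) metric, inside `P_{n,2k}`. -/
def dualI (n k : ℕ) (L : Set (MvPolynomial (Fin n) ℝ)) : Set (MvPolynomial (Fin n) ℝ) :=
  {f | f.IsHomogeneous (2 * k) ∧ ∀ g ∈ L, 0 ≤ L2inner n f g}

/-- The dual cone of `L` in the differential metric, inside `P_{n,2k}`. -/
def dualD (n k : ℕ) (L : Set (MvPolynomial (Fin n) ℝ)) : Set (MvPolynomial (Fin n) ℝ) :=
  {f | f.IsHomogeneous (2 * k) ∧ ∀ g ∈ L, 0 ≤ diffInner n f g}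

/-!
Expanding `(v·x)^N` by the multinomial theorem, its coefficient at `x^α` is `N!/α! · v^α`, so
the apolar pairing of `(v·x)^N` with a form `g` of degree `N` is `N! · g(v)`. As `T f` is,
coefficientwise, the `σ`-average of `f(v) (v·x)^{2k}`, pairing it with `g` and exchanging the
finite sum over monomials with the integral gives `(2k)! ∫ f g dσ`.
-/

open scoped Nat

instance isFiniteMeasure_sphereMeasure (m : ℕ) : IsFiniteMeasure (sphereMeasure m) := by
  unfold sphereMeasure
  by_cases h : (volume : Measure (EuclideanSpace ℝ (Fin m))).toSphere Set.univ = 0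
  · rw [Measure.measure_univ_eq_zero.mp h, smul_zero]
    infer_instance
  · exact Measure.smul_finite _ (ENNReal.inv_ne_top.mpr h)

theorem Continuous.integrable_sphereMeasure {m : ℕ}
    {F : Metric.sphere (0 : EuclideanSpace ℝ (Fin m)) 1 → ℝ} (hF : Continuous F) :
    Integrable F (sphereMeasure m) :=
  hF.integrable_of_hasCompactSupport (HasCompactSupport.of_compactSpace F)

@[fun_prop]
theorem continuous_evalS {m : ℕ} (f : MvPolynomial (Fin m) ℝ) : Continuous (evalS f) :=
  (continuous_eval f).comp (by fun_prop)

theorem linForm_eq_sum_smul (n : ℕ) (v : Fin n → ℝ) : linForm n v = ∑ i, v i • X i := by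
  simp only [linForm, smul_eq_C_mul]

theorem continuous_coeff_linForm_pow (n N : ℕ) (α : Fin n →₀ ℕ) :
    Continuous fun v ↦ (linForm n v ^ N).coeff α := by
  simp only [linForm_eq_sum_smul, coeff_linearCombination_X_pow_of_fintype, Finsupp.prod]
  split_ifs <;> fun_prop

theorem factorial_mul_coeff_linForm_pow {n N : ℕ} (v : Fin n → ℝ) {α : Fin n →₀ ℕ}
    (hα : α.degree = N) :
    (∏ i, ((α i)! : ℝ)) * (linForm n v ^ N).coeff α = N ! * ∏ i, v i ^ α i := by
  have hsum : α.sum (fun _ m ↦ m) = N := by rw [← hα, Finsupp.degree]; rfl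
  rw [linForm_eq_sum_smul, coeff_linearCombination_X_pow_of_fintype, if_pos hsum,
    Finsupp.multinomial_eq_of_support_subset (Finset.subset_univ _),
    Finsupp.prod_fintype _ _ (fun _ ↦ pow_zero _), ← mul_assoc]
  congr 1
  rw [← hα, Finsupp.degree_eq_sum, ← Nat.multinomial_spec]
  push_cast
  rfl

theorem diffInner_eq_sum_support_right {n : ℕ} (f g : MvPolynomial (Fin n) ℝ) :
    diffInner n f g = ∑ α ∈ g.support, (∏ i, ((α i)! : ℝ)) * f.coeff α * g.coeff α := by
  classical
  rw [diffInner,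
    Finset.sum_subset (Finset.subset_union_left (s₂ := g.support))
      (fun α _ hα ↦ by rw [notMem_support_iff.mp hα]; ring),
    ← Finset.sum_subset (Finset.subset_union_right (s₁ := f.support))
      (fun α _ hα ↦ by rw [notMem_support_iff.mp hα]; ring)]

theorem diffInner_linForm_pow {n N : ℕ} (v : Fin n → ℝ) {g : MvPolynomial (Fin n) ℝ}
    (hg : g.IsHomogeneous N) : diffInner n (linForm n v ^ N) g = N ! * eval v g := by
  rw [diffInner_eq_sum_support_right, eval_eq', Finset.mul_sum]
  refine Finset.sum_congr rfl fun α hα ↦ ?_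
  have hα : α.degree = N := by
    rw [Finsupp.degree_eq_weight_one]; exact hg (mem_support_iff.mp hα)
  rw [factorial_mul_coeff_linForm_pow v hα]
  ring

theorem T_switches_metrics_general (n k : ℕ)
    (T : MvPolynomial (Fin n) ℝ →ₗ[ℝ] MvPolynomial (Fin n) ℝ)
    (hT : ∀ (f : MvPolynomial (Fin n) ℝ) (α : Fin n →₀ ℕ),
      (T f).coeff α =
        ∫ v, evalS f v *
          ((linForm n (fun i => (v : EuclideanSpace ℝ (Fin n)) i)) ^ (2 * k)).coeff α
          ∂(sphereMeasure n)) :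
    ∀ f g : MvPolynomial (Fin n) ℝ, f.IsHomogeneous (2 * k) → g.IsHomogeneous (2 * k) →
      diffInner n (T f) g = ((2 * k).factorial : ℝ) * L2inner n f g := by
  intro f g _ hg
  set L : Metric.sphere (0 : EuclideanSpace ℝ (Fin n)) 1 → MvPolynomial (Fin n) ℝ :=
    fun v ↦ linForm n (fun i ↦ (v : EuclideanSpace ℝ (Fin n)) i) ^ (2 * k)
  have hint : ∀ α ∈ g.support, Integrable (fun v ↦ (∏ i, ((α i)! : ℝ)) *
      (evalS f v * (L v).coeff α) * g.coeff α) (sphereMeasure n) := by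
    intro α _
    refine Continuous.integrable_sphereMeasure ?_
    have hL : Continuous fun v ↦ (L v).coeff α :=
      (continuous_coeff_linForm_pow n (2 * k) α).comp (by fun_prop)
    fun_prop
  calc diffInner n (T f) g
      = ∑ α ∈ g.support, ∫ v, (∏ i, ((α i)! : ℝ)) * (evalS f v * (L v).coeff α) * g.coeff α
          ∂(sphereMeasure n) := by
        simp only [diffInner_eq_sum_support_right, hT, integral_mul_const, integral_const_mul]
        rfl
    _ = ∫ v, evalS f v * diffInner n (L v) g ∂(sphereMeasure n) := by
        rw [← integral_finsetSum _ hint]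
        simp only [diffInner_eq_sum_support_right, Finset.mul_sum]
        congr 1; ext v; congr 1; ext α; ring
    _ = (2 * k)! * L2inner n f g := by
        simp only [L, diffInner_linForm_pow _ hg, L2inner, evalS, ← integral_const_mul]
        congr 1; ext v; ring

theorem T_switches_metrics (n k : ℕ) (hn : 2 ≤ n) (hk : 1 ≤ k)
    (T : MvPolynomial (Fin n) ℝ →ₗ[ℝ] MvPolynomial (Fin n) ℝ)
    (hT : ∀ (f : MvPolynomial (Fin n) ℝ) (α : Fin n →₀ ℕ),
      (T f).coeff α =
        ∫ v, evalS f v *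
          ((linForm n (fun i => (v : EuclideanSpace ℝ (Fin n)) i)) ^ (2 * k)).coeff α
          ∂(sphereMeasure n)) :
    ∀ f g : MvPolynomial (Fin n) ℝ, f.IsHomogeneous (2 * k) → g.IsHomogeneous (2 * k) →
      diffInner n (T f) g = ((2 * k).factorial : ℝ) * L2inner n f g :=
  T_switches_metrics_general n k T hT
end
end

section
/- Let n ≥ 1 and k ≥ 1. If f ∈ P_{n,2k} satisfies ⟨f, g²⟩_d ≥ 0 for every g ∈ P_{n,k} (i.e. f lies in the dual cone of the cone of sums of squares with respect to the differential inner product), then f is itself a sum of squares of forms of degree k. In other words, Sq*_d ⊆ Sq. -/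
open MeasureTheory MvPolynomial

noncomputable section

namespace SOSAux

open Finset Matrix

/-- View a function `Fin n → ℕ` as a finsupp. -/
def fa {n : ℕ} (a : Fin n → ℕ) : Fin n →₀ ℕ := Finsupp.equivFunOnFinite.symm a

lemma fa_apply {n : ℕ} (a : Fin n → ℕ) (i : Fin n) : fa a i = a i := rfl

lemma fa_coe {n : ℕ} (d : Fin n →₀ ℕ) : fa (⇑d) = d := Finsupp.equivFunOnFinite_symm_coe d

lemma coe_fa {n : ℕ} (a : Fin n → ℕ) : ⇑(fa a) = a := rfl

lemma fa_add {n : ℕ} (a b : Fin n → ℕ) : fa (a + b) = fa a + fa b := by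
  ext i; simp [fa]

lemma degree_fa {n : ℕ} (a : Fin n → ℕ) : (fa a).degree = ∑ i, a i := by
  rw [Finsupp.degree]
  exact Finset.sum_subset (Finset.subset_univ _)
    (fun i _ h => by simpa [fa_apply] using Finsupp.notMem_support_iff.mp h)

lemma degree_sum_univ {n : ℕ} (d : Fin n →₀ ℕ) : ∑ i, d i = d.degree := by
  rw [← fa_coe d, degree_fa]; rfl

lemma diffInner_monomial {n : ℕ} (f : MvPolynomial (Fin n) ℝ) (δ : Fin n →₀ ℕ) (r : ℝ) :
    diffInner n f (monomial δ r) = (∏ i, ((δ i).factorial : ℝ)) * f.coeff δ * r := by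
  unfold diffInner
  by_cases h : δ ∈ f.support
  · rw [Finset.sum_eq_single δ]
    · simp [coeff_monomial]
    · intro b _ hbδ
      simp [coeff_monomial, Ne.symm hbδ]
    · intro h'; exact absurd h h'
  · have h0 : f.coeff δ = 0 := MvPolynomial.notMem_support_iff.mp h
    rw [h0]
    rw [Finset.sum_eq_zero, mul_zero, zero_mul]
    intro α hα
    have : δ ≠ α := fun he => h (he ▸ hα)
    simp [coeff_monomial, this]

lemma diffInner_sum {n : ℕ} (f : MvPolynomial (Fin n) ℝ) {ι : Type*} (s : Finset ι)
    (g : ι → MvPolynomial (Fin n) ℝ) :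
    diffInner n f (∑ i ∈ s, g i) = ∑ i ∈ s, diffInner n f (g i) := by
  unfold diffInner
  simp only [MvPolynomial.coeff_sum, Finset.mul_sum]
  exact Finset.sum_comm

lemma linForm_pow {n : ℕ} (v : Fin n → ℝ) (d : ℕ) :
    linForm n v ^ d = ∑ a ∈ piAntidiag (univ : Finset (Fin n)) d,
      monomial (fa a) ((Nat.multinomial univ a : ℝ) * ∏ i, v i ^ a i) := by
  rw [linForm, Finset.sum_pow_eq_sum_piAntidiag]
  refine Finset.sum_congr rfl fun a _ => ?_
  rw [monomial_eq]
  have hprod : (fa a).prod (fun i e => (X i : MvPolynomial (Fin n) ℝ) ^ e)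
      = ∏ i, (X i : MvPolynomial (Fin n) ℝ) ^ a i :=
    Finsupp.prod_fintype _ _ (fun i => pow_zero _)
  rw [hprod]
  simp only [mul_pow, Finset.prod_mul_distrib, ← C_pow, ← map_prod, C_mul]
  rw [← map_natCast (C : ℝ →+* MvPolynomial (Fin n) ℝ)]
  ring

lemma coeff_linForm_pow {n : ℕ} (v : Fin n → ℝ) (d : ℕ) (γ : Fin n →₀ ℕ)
    (hγ : γ.degree = d) :
    coeff γ (linForm n v ^ d) = (Nat.multinomial univ ⇑γ : ℝ) * ∏ i, v i ^ γ i := by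
  rw [linForm_pow, MvPolynomial.coeff_sum, Finset.sum_eq_single (⇑γ)]
  · rw [fa_coe, coeff_monomial, if_pos rfl]
  · intro b _ hbγ
    rw [coeff_monomial, if_neg]
    intro h
    exact hbγ (by rw [← coe_fa b, h])
  · intro h
    exfalso
    apply h
    rw [mem_piAntidiag]
    exact ⟨by rw [degree_sum_univ, hγ], fun i _ => mem_univ i⟩

lemma diffInner_linForm_pow {n d : ℕ} (f : MvPolynomial (Fin n) ℝ)
    (hf : f.IsHomogeneous d) (x : Fin n → ℝ) :
    diffInner n f (linForm n x ^ d) = (d.factorial : ℝ) * eval x f := by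
  rw [eval_eq', Finset.mul_sum]
  unfold diffInner
  refine Finset.sum_congr rfl fun γ hγ => ?_
  have hdeg : γ.degree = d := by
    by_contra h
    exact (MvPolynomial.mem_support_iff.mp hγ) (hf.coeff_eq_zero h)
  rw [coeff_linForm_pow x d γ hdeg]
  have hspec : (∏ i, ((γ i).factorial)) * Nat.multinomial univ ⇑γ = d.factorial := by
    have h1 := Nat.multinomial_spec univ ⇑γ
    rwa [show ∑ i ∈ univ, γ i = d by rw [degree_sum_univ, hdeg]] at h1
  have hc : (∏ i, ((γ i).factorial : ℝ)) * (Nat.multinomial univ ⇑γ : ℝ)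
      = (d.factorial : ℝ) := by
    rw [← Nat.cast_prod, ← Nat.cast_mul, hspec]
  linear_combination (coeff γ f * ∏ i, x i ^ γ i) * hc

/-- The index set of exponents of degree `k`. -/
def Dk (n k : ℕ) : Finset (Fin n → ℕ) := Finset.piAntidiag Finset.univ k

/-- The generic homogeneous polynomial of degree `k` with coefficients `w`. -/
noncomputable def gw (n k : ℕ) (w : Dk n k → ℝ) : MvPolynomial (Fin n) ℝ :=
  ∑ a : Dk n k, monomial (fa (a : Fin n → ℕ)) (w a)

lemma gw_isHomogeneous (n k : ℕ) (w : Dk n k → ℝ) : (gw n k w).IsHomogeneous k := by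
  refine MvPolynomial.IsHomogeneous.sum _ _ _ fun a _ => ?_
  refine isHomogeneous_monomial _ ?_
  rw [degree_fa]
  exact ((mem_piAntidiag.mp a.2).1 : ∑ i, (a : Fin n → ℕ) i = k)

/-- The catalecticant matrix of `f`. -/
noncomputable def Mmat (n k : ℕ) (f : MvPolynomial (Fin n) ℝ) :
    Matrix (Dk n k) (Dk n k) ℝ := fun a b =>
  (∏ i, ((((a : Fin n → ℕ) + (b : Fin n → ℕ)) i).factorial : ℝ))
    * coeff (fa ((a : Fin n → ℕ) + (b : Fin n → ℕ))) f

lemma diffInner_gw_sq {n k : ℕ} (f : MvPolynomial (Fin n) ℝ) (w : Dk n k → ℝ) :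
    diffInner n f (gw n k w ^ 2)
      = ∑ a : Dk n k, ∑ b : Dk n k, w a * (Mmat n k f a b * w b) := by
  rw [gw, sq, Finset.sum_mul_sum]
  simp only [monomial_mul]
  rw [diffInner_sum]
  refine Finset.sum_congr rfl fun a _ => ?_
  rw [diffInner_sum]
  refine Finset.sum_congr rfl fun b _ => ?_
  rw [diffInner_monomial, ← fa_add, Mmat]
  simp only [fa_apply]
  ring

lemma dot_eq {ι : Type*} [Fintype ι] (M : Matrix ι ι ℝ) (w : ι → ℝ) :
    dotProduct w (M.mulVec w) = ∑ a, ∑ b, w a * (M a b * w b) := by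
  simp [dotProduct, Matrix.mulVec, Finset.mul_sum]

lemma sq_sum_eq {ι : Type*} [Fintype ι] (B : Matrix ι ι ℝ) (w : ι → ℝ) :
    ∑ i : ι, (∑ a : ι, B i a * w a) ^ 2 = ∑ a : ι, ∑ b : ι, w a * ((Bᴴ * B) a b * w b) := by
  rw [← dot_eq, ← Matrix.mulVec_mulVec, Matrix.dotProduct_mulVec,
    Matrix.vecMul_conjTranspose]
  simp [dotProduct, Matrix.mulVec, sq]

lemma eval_gw {n k : ℕ} (u : Dk n k → ℝ) (x : Fin n → ℝ) :
    eval x (gw n k u) = ∑ a : Dk n k, u a * ∏ i, x i ^ ((a : Fin n → ℕ) i) := by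
  rw [gw, map_sum]
  refine Finset.sum_congr rfl fun a _ => ?_
  rw [eval_monomial]
  congr 1
  exact Finsupp.prod_fintype _ _ fun i => pow_zero _

lemma gw_mult_eq_linForm_pow {n k : ℕ} (x : Fin n → ℝ) :
    gw n k (fun a => (Nat.multinomial univ (a : Fin n → ℕ) : ℝ)
        * ∏ i, x i ^ ((a : Fin n → ℕ) i))
      = linForm n x ^ k := by
  rw [linForm_pow, gw]
  exact Finset.sum_coe_sort (Dk n k)
    (fun a => monomial (fa a) ((Nat.multinomial univ a : ℝ) * ∏ i, x i ^ a i))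

end SOSAux

open SOSAux Finset Matrix in
theorem dual_sos_cone_subset_sos (n k : ℕ) (hn : 1 ≤ n) (hk : 1 ≤ k)
    (f : MvPolynomial (Fin n) ℝ) (hf : f.IsHomogeneous (2 * k))
    (hdual : ∀ g : MvPolynomial (Fin n) ℝ, g.IsHomogeneous k → 0 ≤ diffInner n f (g ^ 2)) :
    IsSOS n k f := by
  classical
  have hherm : (Mmat n k f).IsHermitian := by
    have : (Mmat n k f)ᴴ = Mmat n k f := by
      ext a b
      simp only [Matrix.conjTranspose_apply, star_trivial, Mmat]
      rw [add_comm ((b : Fin n → ℕ)) ((a : Fin n → ℕ))]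
    exact this
  have hpsd : (Mmat n k f).PosSemidef := by
    refine Matrix.posSemidef_iff_dotProduct_mulVec.mpr ⟨hherm, fun w => ?_⟩
    have h := hdual (gw n k w) (gw_isHomogeneous n k w)
    rw [diffInner_gw_sq] at h
    rw [star_trivial, dot_eq]
    exact h
  obtain ⟨B, hB⟩ : ∃ B : Matrix (Dk n k) (Dk n k) ℝ, Mmat n k f = star B * B := by
    open scoped MatrixOrder Matrix.Norms.L2Operator in
    exact CStarAlgebra.nonneg_iff_eq_star_mul_self.mp hpsd.nonneg
  rw [star_eq_conjTranspose] at hB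
  set s : ℝ := Real.sqrt (((2 * k).factorial : ℝ))⁻¹ with hs
  have hs2 : s * s = (((2 * k).factorial : ℝ))⁻¹ := Real.mul_self_sqrt (by positivity)
  refine ⟨Fintype.card (Dk n k),
    fun j => gw n k (fun a => s * (B ((Fintype.equivFin (Dk n k)).symm j) a
      * (Nat.multinomial univ (a : Fin n → ℕ) : ℝ))), fun j => gw_isHomogeneous n k _, ?_⟩
  rw [Equiv.sum_comp (Fintype.equivFin (Dk n k)).symm
    (fun i => gw n k (fun a => s * (B i a * (Nat.multinomial univ (a : Fin n → ℕ) : ℝ))) ^ 2)]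
  apply MvPolynomial.funext
  intro x
  set w : Dk n k → ℝ := fun a =>
    (Nat.multinomial univ (a : Fin n → ℕ) : ℝ) * ∏ i, x i ^ ((a : Fin n → ℕ) i) with hw
  have hQ : ∑ a : Dk n k, ∑ b : Dk n k, w a * (Mmat n k f a b * w b)
      = (((2 * k).factorial : ℝ)) * eval x f := by
    rw [← diffInner_gw_sq, hw, gw_mult_eq_linForm_pow, ← pow_mul, Nat.mul_comm k 2]
    exact diffInner_linForm_pow f hf x
  have heval : eval x (∑ i : Dk n k,
      gw n k (fun a => s * (B i a * (Nat.multinomial univ (a : Fin n → ℕ) : ℝ))) ^ 2)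
      = (s * s) * ∑ i : Dk n k, (∑ a : Dk n k, B i a * w a) ^ 2 := by
    rw [map_sum, Finset.mul_sum]
    refine Finset.sum_congr rfl fun i _ => ?_
    rw [map_pow, eval_gw]
    have : ∑ a : Dk n k, (s * (B i a * (Nat.multinomial univ (a : Fin n → ℕ) : ℝ)))
        * ∏ j, x j ^ ((a : Fin n → ℕ) j) = s * ∑ a : Dk n k, B i a * w a := by
      rw [Finset.mul_sum]
      refine Finset.sum_congr rfl fun a _ => ?_
      rw [hw]
      ring
    rw [this]
    ring
  rw [heval, sq_sum_eq, ← hB, hQ, hs2]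
  have hne : (((2 * k).factorial : ℝ)) ≠ 0 := by positivity
  field_simp
end
end
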